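/- arXiv:2111.09688 — 2 statements merged into one kernel-verified Lean document; each statement's English description precedes it below -/
import Mathlib

section
/- Let λ(χ) = (χ − √χ·√(χ+4))/2 with √· the principal complex square root. Then for every real t ≠ 0, |λ(i·t) + 1| < 1. (Hence φ̂(mh) = C·(λ+1)^m is the mode that decays as m → ∞, the one compatible with boundedness on a semi-infinite domain.) -/
/-- Principal complex square root. -/
noncomputable def csqrt (z : ℂ) : ℂ := z ^ ((1 : ℂ) / 2)

/-- `λ(χ) = (χ − √χ·√(χ+4))/2`. -/
noncomputable def lamM (χ : ℂ) : ℂ := (χ - csqrt χ * csqrt (χ + 4)) / 2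

open Complex in
lemma csqrt_mul_self {z : ℂ} (hz : z ≠ 0) : csqrt z * csqrt z = z := by
  unfold csqrt
  rw [← Complex.cpow_add _ _ hz]
  norm_num

open Complex in
lemma csqrt_re_nonneg (z : ℂ) : 0 ≤ (csqrt z).re := by
  rcases eq_or_ne z 0 with rfl | hz
  · simp [csqrt, Complex.zero_cpow (by norm_num : (1:ℂ)/2 ≠ 0)]
  · unfold csqrt
    rw [Complex.cpow_def_of_ne_zero hz, Complex.exp_re]
    have him : (Complex.log z * ((1:ℂ)/2)).im = z.arg / 2 := by
      simp [Complex.mul_im, Complex.log_im, Complex.log_re]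
      ring
    rw [him]
    have h := Complex.arg_mem_Ioc z
    have hπ := Real.pi_pos
    have hcos : 0 ≤ Real.cos (z.arg / 2) := by
      apply Real.cos_nonneg_of_mem_Icc
      constructor <;> [linarith [h.1]; linarith [h.2]]
    positivity

open Complex in
lemma csqrt_eq {z c : ℂ} (h : c * c = z) (hc : 0 < c.re) : csqrt z = c := by
  have hcne : c ≠ 0 := fun h0 => by simp [h0] at hc
  have hz : z ≠ 0 := h ▸ mul_ne_zero hcne hcne
  have hsq : csqrt z * csqrt z = c * c := by rw [csqrt_mul_self hz, h]
  have : (csqrt z - c) * (csqrt z + c) = 0 := by ring_nf; linear_combination hsq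
  rcases mul_eq_zero.mp this with h1 | h1
  · exact sub_eq_zero.mp h1
  · exfalso
    have heq : csqrt z = -c := by linear_combination h1
    have h2 := csqrt_re_nonneg z
    rw [heq] at h2
    simp only [Complex.neg_re] at h2
    linarith

open Complex in
lemma csqrt_conj {z : ℂ} (hz : z.arg ≠ Real.pi) :
    csqrt ((starRingEnd ℂ) z) = (starRingEnd ℂ) (csqrt z) := by
  have hhalf : (starRingEnd ℂ) ((1:ℂ)/2) = (1:ℂ)/2 := by
    simp [Complex.ext_iff]
  unfold csqrt
  have h := Complex.conj_cpow z ((1:ℂ)/2) hz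
  rwa [hhalf] at h

open Complex in
lemma key (t : ℝ) (ht : 0 < t) : ‖lamM (Complex.I * t) + 1‖ < 1 := by
  set u := Real.sqrt (t/2) with hu
  set R := Real.sqrt (16 + t^2) with hR
  set c := Real.sqrt ((R+4)/2) with hc
  set d := Real.sqrt ((R-4)/2) with hd
  have hR4 : (4:ℝ) ≤ R := by
    rw [hR, show (4:ℝ) = Real.sqrt 16 by
      rw [show (16:ℝ) = 4^2 by norm_num, Real.sqrt_sq (by norm_num)]]
    exact Real.sqrt_le_sqrt (by nlinarith)
  have hR2 : R^2 = 16 + t^2 := Real.sq_sqrt (by positivity)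
  have hu2 : u^2 = t/2 := Real.sq_sqrt (by positivity)
  have hc2 : c^2 = (R+4)/2 := Real.sq_sqrt (by linarith)
  have hd2 : d^2 = (R-4)/2 := Real.sq_sqrt (by linarith)
  have hupos : 0 < u := Real.sqrt_pos.mpr (by linarith)
  have hcnn : 0 ≤ c := Real.sqrt_nonneg _
  have hdnn : 0 ≤ d := Real.sqrt_nonneg _
  have hcd : d < c := by nlinarith
  have hcdt : 2*c*d = t := by
    have hmul : c * d = Real.sqrt ((R+4)/2 * ((R-4)/2)) :=
      (Real.sqrt_mul (by linarith) _).symm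
    have heq : (R+4)/2 * ((R-4)/2) = (t/2)^2 := by nlinarith
    have : c * d = t/2 := by rw [hmul, heq, Real.sqrt_sq (by linarith)]
    linarith
  clear_value d c R u
  -- explicit square roots
  have hI : (Complex.I)^2 = -1 := Complex.I_sq
  have hu2C : (u:ℂ)^2 = (t:ℂ)/2 := by exact_mod_cast congrArg Complex.ofReal hu2
  have hc2C : (c:ℂ)^2 = ((R:ℂ)+4)/2 := by exact_mod_cast congrArg Complex.ofReal hc2
  have hd2C : (d:ℂ)^2 = ((R:ℂ)-4)/2 := by exact_mod_cast congrArg Complex.ofReal hd2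
  have hcdC : 2*(c:ℂ)*(d:ℂ) = (t:ℂ) := by exact_mod_cast congrArg Complex.ofReal hcdt
  have hp : csqrt (Complex.I * t) = (u:ℂ) * (1 + Complex.I) := by
    apply csqrt_eq
    · linear_combination (1 + 2*Complex.I + Complex.I^2) * hu2C + ((t:ℂ)/2) * hI
    · simp [Complex.mul_re]
      positivity
  have hq : csqrt (Complex.I * t + 4) = (c:ℂ) + (d:ℂ) * Complex.I := by
    apply csqrt_eq
    · linear_combination hc2C - hd2C + Complex.I * hcdC + (d:ℂ)^2 * hI
    · simp [Complex.add_re, Complex.mul_re]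
      nlinarith
  -- the quantity
  set a : ℂ := 2 + Complex.I * t with ha
  set s : ℂ := ((u:ℂ) * (1 + Complex.I)) * ((c:ℂ) + (d:ℂ) * Complex.I) with hs
  have hlam : lamM (Complex.I * t) + 1 = (a - s) / 2 := by
    unfold lamM
    rw [hp, hq]
    ring
  have hsre : s.re = u * (c - d) := by
    simp [hs, Complex.mul_re, Complex.mul_im, Complex.add_re, Complex.add_im]
    ring
  have hsim : s.im = u * (c + d) := by
    simp [hs, Complex.mul_re, Complex.mul_im, Complex.add_re, Complex.add_im]
    ring
  have hare : a.re = 2 := by simp [ha]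
  have haim : a.im = t := by simp [ha]
  set A := ‖a - s‖ with hA
  set B := ‖a + s‖ with hB
  have hprod : (a - s) * (a + s) = 4 := by
    have hss : s * s = (Complex.I * t) * (Complex.I * t + 4) := by
      rw [hs, show ((u:ℂ) * (1 + Complex.I)) * ((c:ℂ) + (d:ℂ) * Complex.I) *
        (((u:ℂ) * (1 + Complex.I)) * ((c:ℂ) + (d:ℂ) * Complex.I)) =
        (((u:ℂ) * (1 + Complex.I)) * ((u:ℂ) * (1 + Complex.I))) *
        (((c:ℂ) + (d:ℂ) * Complex.I) * ((c:ℂ) + (d:ℂ) * Complex.I)) from by ring,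
        ← hp, ← hq, csqrt_mul_self, csqrt_mul_self]
      · intro h0
        have : ((Complex.I * t + 4)).re = 0 := by rw [h0]; simp
        simp [Complex.add_re, Complex.mul_re] at this
      · intro h0
        have : ((Complex.I * (t:ℂ))).im = 0 := by rw [h0]; simp
        simp [Complex.mul_im] at this
        linarith
    linear_combination -hss
  have hAB : A * B = 4 := by
    rw [hA, hB, ← norm_mul, hprod]
    simp
  have hAnn : 0 ≤ A := norm_nonneg _
  have hBnn : 0 ≤ B := norm_nonneg _
  have hAB2 : A^2 < B^2 := by
    rw [hA, hB, Complex.sq_norm, Complex.sq_norm, Complex.normSq_apply, Complex.normSq_apply]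
    simp only [Complex.sub_re, Complex.sub_im, Complex.add_re, Complex.add_im,
      hsre, hsim, hare, haim]
    have P1 : 0 < u*(c-d) := mul_pos hupos (by linarith)
    have P2 : 0 < t*(u*(c+d)) := mul_pos ht (mul_pos hupos (by linarith))
    nlinarith [P1, P2]
  have hAltB : A < B := lt_of_pow_lt_pow_left₀ 2 hBnn hAB2
  have hApos : 0 < A := by
    rcases lt_or_eq_of_le hAnn with h | h
    · exact h
    · exfalso; rw [← h] at hAB; simp at hAB
  have hA2 : A * A < 4 := by
    calc A * A < A * B := by exact mul_lt_mul_of_pos_left hAltB hApos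
    _ = 4 := hAB
  have hAlt2 : A < 2 := by
    apply lt_of_pow_lt_pow_left₀ 2 (by norm_num : (0:ℝ) ≤ 2)
    calc A^2 = A*A := sq A
    _ < 4 := hA2
    _ = 2^2 := by norm_num
  rw [hlam, norm_div]
  simp only [Complex.norm_ofNat, ← hA]
  linarith

/-- For every real `t ≠ 0`, `|λ(i·t) + 1| < 1`: the mode `(λ+1)^m` decays as `m → ∞`. -/
theorem decaying_mode (t : ℝ) (ht : t ≠ 0) :
    ‖lamM (Complex.I * t) + 1‖ < 1 := by
  rcases ht.lt_or_gt with h | h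
  · have hk := key (-t) (by linarith)
    have harg1 : (Complex.I * ((-t : ℝ) : ℂ)).arg ≠ Real.pi := by
      intro h0
      have h1 := Complex.arg_eq_pi_iff.mp h0
      have him : (Complex.I * ((-t:ℝ):ℂ)).im = -t := by simp
      rw [him] at h1
      exact absurd h1.2 (by linarith)
    have harg2 : (Complex.I * ((-t : ℝ) : ℂ) + 4).arg ≠ Real.pi := by
      intro h0
      have h1 := Complex.arg_eq_pi_iff.mp h0
      have hre : (Complex.I * ((-t:ℝ):ℂ) + 4).re = 4 := by simp
      rw [hre] at h1
      linarith [h1.1]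
    have hconj : (starRingEnd ℂ) (Complex.I * ((-t : ℝ) : ℂ)) = Complex.I * t := by
      simp [map_mul]
    have hlamconj : lamM (Complex.I * t) = (starRingEnd ℂ) (lamM (Complex.I * ((-t:ℝ):ℂ))) := by
      unfold lamM
      rw [← hconj, csqrt_conj harg1,
        show (starRingEnd ℂ) (Complex.I * ((-t : ℝ) : ℂ)) + 4 =
          (starRingEnd ℂ) (Complex.I * ((-t : ℝ) : ℂ) + 4) by
            rw [map_add, map_ofNat],
        csqrt_conj harg2]
      rw [map_div₀, map_sub, map_mul, map_ofNat]
      rw [map_mul]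
    rw [hlamconj, show (starRingEnd ℂ) (lamM (Complex.I * ((-t:ℝ):ℂ))) + 1 =
      (starRingEnd ℂ) (lamM (Complex.I * ((-t:ℝ):ℂ)) + 1) by simp, Complex.norm_conj]
    exact hk
  · exact key t h
end

section
/- Fix positive reals ν_a, ν_o, h_a, h_o. For real t ≠ 0 and j ∈ {a,o}, set χ_j(t) = i·t·h_j²/ν_j and λ_j(t) = (χ_j(t) − √(χ_j(t))·√(χ_j(t)+4))/2, using the principal complex square root. Then (h_a·λ_o(t))/(h_o·λ_a(t)) tends to √(ν_a/ν_o) as t → 0 with t ≠ 0, and χ_a(t)/λ_a(t) tends to 0 as t → 0 with t ≠ 0. -/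
open Filter Topology

lemma csqrt_zero : csqrt 0 = 0 := by
  simp [csqrt, Complex.zero_cpow (by norm_num : (1:ℂ)/2 ≠ 0)]

lemma csqrt_sq (z : ℂ) : csqrt z * csqrt z = z := by
  rcases eq_or_ne z 0 with rfl | h
  · simp [csqrt_zero]
  · rw [csqrt, ← Complex.cpow_add _ _ h]
    norm_num

lemma csqrt_ofReal {r : ℝ} (hr : 0 ≤ r) : csqrt (r : ℂ) = (Real.sqrt r : ℂ) := by
  rw [csqrt, Real.sqrt_eq_rpow, show ((1:ℂ)/2) = (((1:ℝ)/2 : ℝ) : ℂ) by norm_num,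
    ← Complex.ofReal_cpow hr]

lemma csqrt_four : csqrt 4 = 2 := by
  have : ((4:ℝ):ℂ) = 4 := by norm_num
  rw [← this, csqrt_ofReal (by norm_num), show Real.sqrt 4 = 2 by
    rw [show (4:ℝ) = 2^2 by norm_num, Real.sqrt_sq (by norm_num)]]
  norm_num

lemma csqrt_ofReal_mul {r : ℝ} (hr : 0 < r) (z : ℂ) :
    csqrt ((r : ℂ) * z) = csqrt (r : ℂ) * csqrt z := by
  rcases eq_or_ne z 0 with rfl | hz
  · simp [csqrt_zero]
  have hr' : (r : ℂ) ≠ 0 := Complex.ofReal_ne_zero.mpr hr.ne'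
  unfold csqrt
  rw [Complex.cpow_def_of_ne_zero (mul_ne_zero hr' hz),
    Complex.cpow_def_of_ne_zero hr', Complex.cpow_def_of_ne_zero hz,
    Complex.log_ofReal_mul hr hz, add_mul, Complex.exp_add,
    Complex.ofReal_log hr.le]

noncomputable def gfun (χ : ℂ) : ℂ := (csqrt χ - csqrt (χ + 4)) / 2

lemma lamM_eq (χ : ℂ) : lamM χ = csqrt χ * gfun χ := by
  unfold lamM gfun
  rw [mul_div_assoc', mul_sub, csqrt_sq]

lemma csqrt_continuousAt_zero : ContinuousAt csqrt 0 :=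
  Complex.continuousAt_cpow_const_of_re_pos (by simp) (by norm_num)

lemma gfun_continuousAt_zero : ContinuousAt gfun 0 := by
  apply ContinuousAt.div_const
  refine ContinuousAt.sub csqrt_continuousAt_zero ?_
  have hc4 : ContinuousAt csqrt ((0:ℂ) + 4) :=
    Complex.continuousAt_cpow_const_of_re_pos (by norm_num) (by norm_num)
  have hg : ContinuousAt (fun χ : ℂ => χ + 4) 0 := by fun_prop
  have := ContinuousAt.comp (x := (0:ℂ)) hc4 hg
  simpa [Function.comp_def] using this

lemma gfun_zero : gfun 0 = -1 := by
  simp [gfun, csqrt_zero, csqrt_four]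

lemma div_lamM (χ : ℂ) (h : csqrt χ ≠ 0) : χ / lamM χ = csqrt χ / gfun χ := by
  rcases eq_or_ne (gfun χ) 0 with hg | hg
  · simp [lamM_eq, hg]
  · rw [lamM_eq, div_eq_div_iff (mul_ne_zero h hg) hg, ← mul_assoc, csqrt_sq]

lemma aux_div (a b c c' d d' x : ℂ) (hx : x ≠ 0) :
    (a * (c * x * d)) / (b * (c' * x * d')) = (a * c * d) / (b * c' * d') := by
  rw [show a * (c * x * d) = (a * c * d) * x by ring,
    show b * (c' * x * d') = (b * c' * d') * x by ring,
    mul_div_mul_right _ _ hx]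

/-- With `χ_j(t) = i·t·h_j²/ν_j` and `λ_j(t) = λ(χ_j(t))` for `j ∈ {a,o}`:
`(h_a·λ_o(t))/(h_o·λ_a(t)) → √(ν_a/ν_o)` and `χ_a(t)/λ_a(t) → 0` as `t → 0`, `t ≠ 0`. -/
theorem low_frequency_limits (νa νo ha ho : ℝ)
    (hνa : 0 < νa) (hνo : 0 < νo) (hha : 0 < ha) (hho : 0 < ho) :
    Tendsto (fun t : ℝ =>
        ((ha : ℂ) * lamM (Complex.I * t * (ho : ℂ) ^ 2 / (νo : ℂ))) /
        ((ho : ℂ) * lamM (Complex.I * t * (ha : ℂ) ^ 2 / (νa : ℂ))))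
      (𝓝[≠] (0 : ℝ)) (𝓝 ((Real.sqrt (νa / νo) : ℝ) : ℂ)) ∧
    Tendsto (fun t : ℝ =>
        (Complex.I * t * (ha : ℂ) ^ 2 / (νa : ℂ)) /
          lamM (Complex.I * t * (ha : ℂ) ^ 2 / (νa : ℂ)))
      (𝓝[≠] (0 : ℝ)) (𝓝 (0 : ℂ)) := by
  set βa : ℝ := ha ^ 2 / νa with hβa
  set βo : ℝ := ho ^ 2 / νo with hβo
  have hβa0 : 0 < βa := div_pos (pow_pos hha 2) hνa
  have hβo0 : 0 < βo := div_pos (pow_pos hho 2) hνo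
  have hχa : ∀ t : ℝ, Complex.I * t * (ha : ℂ) ^ 2 / (νa : ℂ) = (βa : ℂ) * (Complex.I * t) := by
    intro t
    have hne : (νa : ℂ) ≠ 0 := Complex.ofReal_ne_zero.mpr hνa.ne'
    rw [hβa]; push_cast; field_simp
  have hχo : ∀ t : ℝ, Complex.I * t * (ho : ℂ) ^ 2 / (νo : ℂ) = (βo : ℂ) * (Complex.I * t) := by
    intro t
    have hne : (νo : ℂ) ≠ 0 := Complex.ofReal_ne_zero.mpr hνo.ne'
    rw [hβo]; push_cast; field_simp
  have htend : Tendsto (fun t : ℝ => Complex.I * (t : ℂ)) (𝓝[≠] (0:ℝ)) (𝓝 0) := by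
    have hcont : Continuous fun t : ℝ => Complex.I * (t : ℂ) := by fun_prop
    have h := hcont.tendsto (0:ℝ)
    simp only [Complex.ofReal_zero, mul_zero] at h
    exact h.mono_left nhdsWithin_le_nhds
  have hmul : ∀ β : ℝ, Tendsto (fun t : ℝ => (β : ℂ) * (Complex.I * t)) (𝓝[≠] (0:ℝ)) (𝓝 0) := by
    intro β
    have h := tendsto_const_nhds (x := (β:ℂ)) (f := 𝓝[≠] (0:ℝ)) |>.mul htend
    simpa using h
  have hga : Tendsto (fun t : ℝ => gfun ((βa : ℂ) * (Complex.I * t))) (𝓝[≠] (0:ℝ)) (𝓝 (-1)) := by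
    rw [← gfun_zero]
    exact gfun_continuousAt_zero.tendsto.comp (hmul βa)
  have hgo : Tendsto (fun t : ℝ => gfun ((βo : ℂ) * (Complex.I * t))) (𝓝[≠] (0:ℝ)) (𝓝 (-1)) := by
    rw [← gfun_zero]
    exact gfun_continuousAt_zero.tendsto.comp (hmul βo)
  have hsq : ∀ t : ℝ, t ≠ 0 → csqrt (Complex.I * t) ≠ 0 := by
    intro t ht h
    have h2 := csqrt_sq (Complex.I * t)
    rw [h, mul_zero] at h2
    have := mul_eq_zero.mp h2.symm
    rcases this with h3 | h3
    · exact Complex.I_ne_zero h3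
    · exact ht (by exact_mod_cast h3)
  constructor
  · -- first limit
    have key : ∀ t : ℝ, t ≠ 0 →
        ((ha : ℂ) * lamM (Complex.I * t * (ho : ℂ) ^ 2 / (νo : ℂ))) /
        ((ho : ℂ) * lamM (Complex.I * t * (ha : ℂ) ^ 2 / (νa : ℂ))) =
        ((ha : ℂ) * (Real.sqrt βo : ℂ) * gfun ((βo : ℂ) * (Complex.I * t))) /
        ((ho : ℂ) * (Real.sqrt βa : ℂ) * gfun ((βa : ℂ) * (Complex.I * t))) := by
      intro t ht
      rw [hχa, hχo, lamM_eq ((βo:ℂ) * (Complex.I * t)), lamM_eq ((βa:ℂ) * (Complex.I * t)),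
        csqrt_ofReal_mul hβa0, csqrt_ofReal_mul hβo0,
        csqrt_ofReal hβa0.le, csqrt_ofReal hβo0.le]
      exact aux_div _ _ _ _ _ _ _ (hsq t ht)
    have hlim : Tendsto (fun t : ℝ =>
        ((ha : ℂ) * (Real.sqrt βo : ℂ) * gfun ((βo : ℂ) * (Complex.I * t))) /
        ((ho : ℂ) * (Real.sqrt βa : ℂ) * gfun ((βa : ℂ) * (Complex.I * t))))
        (𝓝[≠] (0:ℝ))
        (𝓝 (((ha : ℂ) * (Real.sqrt βo : ℂ) * (-1)) / ((ho : ℂ) * (Real.sqrt βa : ℂ) * (-1)))) := by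
      refine Tendsto.div (tendsto_const_nhds.mul hgo) (tendsto_const_nhds.mul hga) ?_
      refine mul_ne_zero (mul_ne_zero ?_ ?_) (by norm_num)
      · exact Complex.ofReal_ne_zero.mpr hho.ne'
      · exact Complex.ofReal_ne_zero.mpr (Real.sqrt_pos.mpr hβa0).ne'
    have hval : ((ha : ℂ) * (Real.sqrt βo : ℂ) * (-1)) / ((ho : ℂ) * (Real.sqrt βa : ℂ) * (-1)) =
        ((Real.sqrt (νa / νo) : ℝ) : ℂ) := by
      have hr : (ha * Real.sqrt βo) / (ho * Real.sqrt βa) = Real.sqrt (νa / νo) := by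
        have e1 : Real.sqrt βo = ho / Real.sqrt νo := by
          rw [hβo, Real.sqrt_div (sq_nonneg ho), Real.sqrt_sq hho.le]
        have e2 : Real.sqrt βa = ha / Real.sqrt νa := by
          rw [hβa, Real.sqrt_div (sq_nonneg ha), Real.sqrt_sq hha.le]
        rw [e1, e2, Real.sqrt_div hνa.le]
        have h1 : Real.sqrt νa ≠ 0 := (Real.sqrt_pos.mpr hνa).ne'
        have h2 : Real.sqrt νo ≠ 0 := (Real.sqrt_pos.mpr hνo).ne'
        field_simp
      rw [mul_neg_one, mul_neg_one, neg_div_neg_eq, ← hr]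
      push_cast
      ring
    rw [← hval]
    refine hlim.congr' ?_
    filter_upwards [self_mem_nhdsWithin] with t ht
    exact (key t ht).symm
  · -- second limit
    have key : ∀ t : ℝ, t ≠ 0 →
        (Complex.I * t * (ha : ℂ) ^ 2 / (νa : ℂ)) /
          lamM (Complex.I * t * (ha : ℂ) ^ 2 / (νa : ℂ)) =
        csqrt ((βa : ℂ) * (Complex.I * t)) / gfun ((βa : ℂ) * (Complex.I * t)) := by
      intro t ht
      rw [hχa]
      refine div_lamM _ ?_
      rw [csqrt_ofReal_mul hβa0]
      exact mul_ne_zero (by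
        rw [csqrt_ofReal hβa0.le]
        exact Complex.ofReal_ne_zero.mpr (Real.sqrt_pos.mpr hβa0).ne') (hsq t ht)
    have hcs : Tendsto (fun t : ℝ => csqrt ((βa : ℂ) * (Complex.I * t))) (𝓝[≠] (0:ℝ)) (𝓝 0) := by
      have h := csqrt_continuousAt_zero.tendsto.comp (hmul βa)
      simpa [csqrt_zero, Function.comp_def] using h
    have hlim : Tendsto (fun t : ℝ =>
        csqrt ((βa : ℂ) * (Complex.I * t)) / gfun ((βa : ℂ) * (Complex.I * t)))
        (𝓝[≠] (0:ℝ)) (𝓝 ((0:ℂ) / (-1))) :=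
      Tendsto.div hcs hga (by norm_num)
    rw [show ((0:ℂ) / (-1)) = 0 by norm_num] at hlim
    refine hlim.congr' ?_
    filter_upwards [self_mem_nhdsWithin] with t ht
    exact (key t ht).symm
end
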